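/- Let θ be irrational and M ≥ 1. Then the incoming and outgoing partitions together satisfy κ_θ = 1: writing P^in_θ(M) = (a₁,…,a_k) and P^out_θ(M) = (b₁,…,b_l), one has ∑_{i=1}^k ⌈aᵢθ⌉ − ∑_{j=1}^l ⌊bⱼθ⌋ = 1. -/

import Mathlib

open scoped Classical
open Finset

/-- The next (largest) entry of the incoming partition: the largest `a ∈ {1,…,M}`
such that `⌈aθ⌉/a < ⌈a'θ⌉/a'` for all `a' ∈ {1,…,a−1}`. -/
noncomputable def pinStep (θ : ℝ) (M : ℕ) : ℕ :=
  (((Finset.Icc 1 M).filter (fun a : ℕ => ∀ a' ∈ Finset.Ico 1 a,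
      ((⌈(a : ℝ) * θ⌉ : ℤ) : ℝ) / (a : ℝ) < ((⌈(a' : ℝ) * θ⌉ : ℤ) : ℝ) / (a' : ℝ))).max).unbotD 0

/-- Fuel-based recursion computing the incoming partition `P^in_θ(M)`. -/
noncomputable def pinListAux (θ : ℝ) : ℕ → ℕ → List ℕ
  | 0, _ => []
  | fuel + 1, M =>
      if M = 0 then [] else pinStep θ M :: pinListAux θ fuel (M - pinStep θ M)

/-- The incoming partition `P^in_θ(M)`, listed in the order produced by the recursion
(which is nonincreasing). -/
noncomputable def pinList (θ : ℝ) (M : ℕ) : List ℕ := pinListAux θ M M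

/-- The outgoing partition `P^out_θ(M) := P^in_{−θ}(M)`. -/
noncomputable def poutList (θ : ℝ) (M : ℕ) : List ℕ := pinList (-θ) M

/-!
The greedy step `a = pinStep θ M` minimises `⌈nθ⌉/n` over `1 ≤ n ≤ M`, and for such an `a`
the ceiling is additive: `⌈aθ⌉ + ⌈(M-a)θ⌉ = ⌈Mθ⌉`, since `⌈(M-a)θ⌉ = ⌈Mθ⌉ - ⌈aθ⌉ + 1` would
force `⌈aθ⌉/a > ⌈Mθ⌉/M`. Telescoping along the recursion gives `∑ ⌈aᵢθ⌉ = ⌈Mθ⌉`, and the same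
identity for `-θ` gives `∑ ⌊bⱼθ⌋ = ⌊Mθ⌋`. For irrational `θ`, `Mθ` is not an integer, so
`⌈Mθ⌉ - ⌊Mθ⌋ = 1`.
-/

theorem Int.ceil_add_ceil_eq_of_ceil_div_le {θ a b : ℝ} (ha : 0 < a) (hb : 0 ≤ b)
    (h : (⌈a * θ⌉ : ℝ) / a ≤ ⌈(a + b) * θ⌉ / (a + b)) :
    ⌈a * θ⌉ + ⌈b * θ⌉ = ⌈(a + b) * θ⌉ := by
  have hsplit : (a + b) * θ = a * θ + b * θ := add_mul a b θ
  have hle : ⌈(a + b) * θ⌉ ≤ ⌈a * θ⌉ + ⌈b * θ⌉ := hsplit ▸ Int.ceil_add_le _ _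
  have hge : ⌈a * θ⌉ + ⌈b * θ⌉ ≤ ⌈(a + b) * θ⌉ + 1 := hsplit ▸ Int.ceil_add_ceil_le _ _
  refine le_antisymm ?_ hle
  by_contra! hlt
  have hdrop : (⌈(a + b) * θ⌉ : ℝ) = ⌈a * θ⌉ + ⌈b * θ⌉ - 1 := by exact_mod_cast (by omega)
  rw [div_le_div_iff₀ ha (by linarith), hdrop] at h
  -- `h` now reads `b⌈aθ⌉ + a ≤ a⌈bθ⌉`, while `a⌈bθ⌉ < abθ + a ≤ b⌈aθ⌉ + a`.
  nlinarith [mul_le_mul_of_nonneg_left (Int.le_ceil (a * θ)) hb,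
    mul_lt_mul_of_pos_left (Int.ceil_lt_add_one (b * θ)) ha]

noncomputable def pinCandidates (θ : ℝ) (M : ℕ) : Finset ℕ :=
  (Icc 1 M).filter (fun a : ℕ => ∀ a' ∈ Ico 1 a,
    ((⌈(a : ℝ) * θ⌉ : ℤ) : ℝ) / (a : ℝ) < ((⌈(a' : ℝ) * θ⌉ : ℤ) : ℝ) / (a' : ℝ))

section PinStep

variable {θ : ℝ} {M : ℕ}

theorem mem_pinCandidates {a : ℕ} :
    a ∈ pinCandidates θ M ↔ (1 ≤ a ∧ a ≤ M) ∧
      ∀ a', 1 ≤ a' → a' < a → (⌈(a : ℝ) * θ⌉ : ℝ) / a < (⌈(a' : ℝ) * θ⌉ : ℝ) / a' := by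
  simp only [pinCandidates, Finset.mem_filter, Finset.mem_Icc, Finset.mem_Ico, and_imp]

theorem one_mem_pinCandidates (hM : 1 ≤ M) : 1 ∈ pinCandidates θ M :=
  mem_pinCandidates.mpr ⟨⟨le_rfl, hM⟩, fun _ h₁ h₂ => absurd h₂ (not_lt.mpr h₁)⟩

theorem pinStep_eq_max' (hM : 1 ≤ M) :
    pinStep θ M = (pinCandidates θ M).max' ⟨1, one_mem_pinCandidates hM⟩ := by
  rw [pinStep, ← pinCandidates, ← Finset.coe_max' ⟨1, one_mem_pinCandidates hM⟩]
  rfl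

theorem pinStep_mem_pinCandidates (hM : 1 ≤ M) : pinStep θ M ∈ pinCandidates θ M :=
  pinStep_eq_max' hM ▸ Finset.max'_mem _ _

theorem one_le_pinStep (hM : 1 ≤ M) : 1 ≤ pinStep θ M :=
  (mem_pinCandidates.mp (pinStep_mem_pinCandidates hM)).1.1

theorem pinStep_le (hM : 1 ≤ M) : pinStep θ M ≤ M :=
  (mem_pinCandidates.mp (pinStep_mem_pinCandidates hM)).1.2

theorem ceil_div_pinStep_le (hM : 1 ≤ M) {n : ℕ} (hn : 1 ≤ n) (hnM : n ≤ M) :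
    (⌈(pinStep θ M : ℝ) * θ⌉ : ℝ) / pinStep θ M ≤ (⌈(n : ℝ) * θ⌉ : ℝ) / n := by
  induction n using Nat.strong_induction_on with
  | _ n ih =>
    by_cases hmem : n ∈ pinCandidates θ M
    · have hle : n ≤ pinStep θ M := pinStep_eq_max' hM ▸ Finset.le_max' _ n hmem
      rcases hle.lt_or_eq with hlt | rfl
      · exact ((mem_pinCandidates.mp (pinStep_mem_pinCandidates hM)).2 n hn hlt).le
      · rfl
    · simp only [mem_pinCandidates, not_and, not_forall, not_lt] at hmem
      obtain ⟨n', hn'1, hn'n, hn'le⟩ := hmem ⟨hn, hnM⟩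
      exact (ih n' hn'n hn'1 (hn'n.le.trans hnM)).trans hn'le

theorem ceil_pinStep_add_ceil_sub (hM : 1 ≤ M) :
    ⌈(pinStep θ M : ℝ) * θ⌉ + ⌈((M - pinStep θ M : ℕ) : ℝ) * θ⌉ = ⌈(M : ℝ) * θ⌉ := by
  have hsum : (pinStep θ M : ℝ) + ((M - pinStep θ M : ℕ) : ℝ) = M := by
    rw [Nat.cast_sub (pinStep_le hM)]; ring
  have key := Int.ceil_add_ceil_eq_of_ceil_div_le (θ := θ)
    (by exact_mod_cast one_le_pinStep hM) (Nat.cast_nonneg (M - pinStep θ M))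
    (hsum ▸ ceil_div_pinStep_le hM hM le_rfl)
  rwa [hsum] at key

end PinStep

theorem sum_ceil_pinListAux (θ : ℝ) :
    ∀ fuel M : ℕ, M ≤ fuel →
      ((pinListAux θ fuel M).map fun a : ℕ => ⌈(a : ℝ) * θ⌉).sum = ⌈(M : ℝ) * θ⌉
  | 0, M, hM => by
    obtain rfl : M = 0 := by omega
    simp [pinListAux]
  | fuel + 1, M, hM => by
    rcases Nat.eq_zero_or_pos M with rfl | hpos
    · simp [pinListAux]
    rw [pinListAux, if_neg hpos.ne', List.map_cons, List.sum_cons,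
      sum_ceil_pinListAux θ fuel (M - pinStep θ M) (by have := one_le_pinStep (θ := θ) hpos; omega),
      ceil_pinStep_add_ceil_sub hpos]

theorem sum_ceil_pinList (θ : ℝ) (M : ℕ) :
    ((pinList θ M).map fun a : ℕ => ⌈(a : ℝ) * θ⌉).sum = ⌈(M : ℝ) * θ⌉ :=
  sum_ceil_pinListAux θ M M le_rfl

theorem sum_floor_poutList (θ : ℝ) (M : ℕ) :
    ((poutList θ M).map fun b : ℕ => ⌊(b : ℝ) * θ⌋).sum = ⌊(M : ℝ) * θ⌋ := by
  have hfloor (x : ℝ) : ⌊x * θ⌋ = -⌈x * -θ⌉ := by rw [mul_neg, Int.ceil_neg, neg_neg]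
  simp only [hfloor, poutList, ← sum_ceil_pinList (-θ) M]
  induction pinList (-θ) M <;> simp_all [add_comm]

/-- In `kappa_pin_pout` the binder `a : ℝ` makes Lean coerce the list of naturals to `List ℝ`
by a monadic `bind`; this removes that coercion. -/
theorem List.map_natCast_real {α : Type*} (L : List ℕ) (f : ℝ → α) :
    (L : List ℝ).map f = L.map fun a : ℕ => f a := by
  simp only [List.pure_def, List.bind_eq_flatMap, List.map_flatMap, List.map_cons, List.map_nil]
  exact List.flatMap_pure_eq_map _ _

/-- `κ_θ = 1` for the pair (incoming partition, outgoing partition):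
`∑ᵢ ⌈aᵢθ⌉ − ∑ⱼ ⌊bⱼθ⌋ = 1`. -/
theorem kappa_pin_pout (θ : ℝ) (hθ : Irrational θ) (M : ℕ) (hM : 1 ≤ M) :
    ((pinList θ M).map (fun a => ⌈(a : ℝ) * θ⌉)).sum -
      ((poutList θ M).map (fun b => ⌊(b : ℝ) * θ⌋)).sum = 1 := by
  rw [List.map_natCast_real, List.map_natCast_real, sum_ceil_pinList, sum_floor_poutList]
  have hMθ : (M : ℝ) * θ ∉ Set.range Int.cast := by
    rintro ⟨m, hm⟩
    exact (hθ.natCast_mul (by omega)).ne_int m hm.symm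
  rw [(Int.ceil_eq_floor_add_one_iff_notMem _).mpr hMθ]
  ring
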